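/- arXiv:1705.02762 — 6 statements merged into one kernel-verified Lean document; each statement's English description precedes it below -/
import Mathlib

section
/- Let f⁰: ℝ × X × U → ℝ be bounded by M > 0 on the admissible set. For t₀ < t₁ and δ₀ ∈ (0, t₁ - t₀), let J̄_{[s,t]} denote the infimum of the time-averaged cost (1/(t-s))∫_s^t f⁰(τ, y(τ), u(τ)) dτ over admissible pairs on [s,t]. Then J̄_{[t₀,t₁]} - J̄_{[t₀+δ₀,t₁]} ≥ -2Mδ₀/(t₁-t₀). Consequently, if both limits as t₁ → ∞ exist, J̄_{[t₀+δ₀,+∞)} ≤ J̄_{[t₀,+∞)}. -/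
open MeasureTheory Set Filter

/-- If `f⁰` is bounded by `M` along admissible pairs, then shortening the horizon from
`[t₀,t₁]` to `[t₀+δ₀,t₁]` decreases the optimal time-averaged value by at most
`2Mδ₀/(t₁-t₀)`; consequently the limit values satisfy `J̄_{[t₀+δ₀,∞)} ≤ J̄_{[t₀,∞)}`. -/
theorem stmt_1
    {X U : Type*}
    (f0 : ℝ → X → U → ℝ) (M : ℝ) (hM : 0 < M)
    -- admissible pairs on each interval [s,t]
    (Adm : ℝ → ℝ → Set ((ℝ → X) × (ℝ → U)))
    -- the restriction of an admissible pair on [t₀,t₁] to a subinterval is admissible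
    (hrestr : ∀ s t s' t' p, s ≤ s' → t' ≤ t → p ∈ Adm s t → p ∈ Adm s' t')
    -- the running cost is bounded by M along admissible pairs
    (hbound : ∀ s t p, p ∈ Adm s t → ∀ τ ∈ Icc s t, |f0 τ (p.1 τ) (p.2 τ)| ≤ M)
    -- integrability of the running cost along admissible pairs
    (hintg : ∀ s t p, p ∈ Adm s t →
      IntegrableOn (fun τ => f0 τ (p.1 τ) (p.2 τ)) (Icc s t))
    -- J̄_{[s,t]} is the infimum of the time-averaged cost over admissible pairs
    (Jbar : ℝ → ℝ → ℝ)
    (hJbar : ∀ s t, s < t → IsGLB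
      {v : ℝ | ∃ p ∈ Adm s t, v = (1 / (t - s)) * ∫ τ in s..t, f0 τ (p.1 τ) (p.2 τ)}
      (Jbar s t))
    (t₀ t₁ δ₀ : ℝ) (ht : t₀ < t₁) (hδ₀ : 0 < δ₀) (hδ₀' : δ₀ < t₁ - t₀)
    (hne : (Adm t₀ t₁).Nonempty) :
    Jbar t₀ t₁ - Jbar (t₀ + δ₀) t₁ ≥ -(2 * M * δ₀) / (t₁ - t₀) ∧
    (∀ Jinf Jinf' : ℝ,
      Tendsto (fun t => Jbar t₀ t) atTop (nhds Jinf) →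
      Tendsto (fun t => Jbar (t₀ + δ₀) t) atTop (nhds Jinf') →
      Jinf' ≤ Jinf) := by
  -- Key estimate for any horizon t with t₀ + δ₀ < t
  have key : ∀ t : ℝ, t₀ + δ₀ < t →
      Jbar t₀ t - Jbar (t₀ + δ₀) t ≥ -(2 * M * δ₀) / (t - t₀) := by
    intro t htt
    have ht0t : t₀ < t := lt_trans (by linarith) htt
    have hT : (0:ℝ) < t - t₀ := by linarith
    have hTd : (0:ℝ) < t - (t₀ + δ₀) := by linarith
    -- Jbar (t₀+δ₀) t - 2Mδ₀/(t-t₀) is a lower bound of the value set on [t₀,t]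
    have hlb : Jbar (t₀ + δ₀) t + (-(2 * M * δ₀) / (t - t₀)) ∈
        lowerBounds {v : ℝ | ∃ p ∈ Adm t₀ t,
          v = (1 / (t - t₀)) * ∫ τ in t₀..t, f0 τ (p.1 τ) (p.2 τ)} := by
      rintro v ⟨p, hp, rfl⟩
      -- restriction to [t₀+δ₀, t]
      have hp' : p ∈ Adm (t₀ + δ₀) t := hrestr t₀ t (t₀ + δ₀) t p (by linarith) le_rfl hp
      set g : ℝ → ℝ := fun τ => f0 τ (p.1 τ) (p.2 τ) with hg
      have hint : IntegrableOn g (Icc t₀ t) := hintg t₀ t p hp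
      have hI1 : IntervalIntegrable g volume t₀ (t₀ + δ₀) := by
        rw [intervalIntegrable_iff_integrableOn_Ioc_of_le (by linarith)]
        exact hint.mono_set (fun x hx => ⟨le_of_lt hx.1, le_trans hx.2 (by linarith)⟩)
      have hI2 : IntervalIntegrable g volume (t₀ + δ₀) t := by
        rw [intervalIntegrable_iff_integrableOn_Ioc_of_le (by linarith)]
        exact hint.mono_set (fun x hx => ⟨le_trans (by linarith) (le_of_lt hx.1), hx.2⟩)
      have hsplit : (∫ τ in t₀..(t₀ + δ₀), g τ) + (∫ τ in (t₀ + δ₀)..t, g τ)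
          = ∫ τ in t₀..t, g τ :=
        intervalIntegral.integral_add_adjacent_intervals hI1 hI2
      set C := ∫ τ in t₀..(t₀ + δ₀), g τ with hC
      set B := ∫ τ in (t₀ + δ₀)..t, g τ with hB
      -- bounds on C and B
      have hCb : |C| ≤ M * δ₀ := by
        have := intervalIntegral.norm_integral_le_of_norm_le_const
          (C := M) (f := g) (a := t₀) (b := t₀ + δ₀) ?_
        · simpa [abs_of_pos hδ₀, Real.norm_eq_abs] using this
        · intro x hx
          rw [uIoc_of_le (by linarith)] at hx
          exact hbound t₀ t p hp x ⟨le_of_lt hx.1, le_trans hx.2 (by linarith)⟩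
      have hBb : |B| ≤ M * (t - (t₀ + δ₀)) := by
        have := intervalIntegral.norm_integral_le_of_norm_le_const
          (C := M) (f := g) (a := t₀ + δ₀) (b := t) ?_
        · simpa [abs_of_pos hTd, Real.norm_eq_abs] using this
        · intro x hx
          rw [uIoc_of_le (by linarith)] at hx
          exact hbound t₀ t p hp x ⟨le_trans (by linarith) (le_of_lt hx.1), hx.2⟩
      -- Jbar (t₀+δ₀) t ≤ value of restricted pair
      have hJle : Jbar (t₀ + δ₀) t ≤ (1 / (t - (t₀ + δ₀))) * B := by
        exact (hJbar (t₀ + δ₀) t (by linarith)).1 ⟨p, hp', rfl⟩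
      -- arithmetic
      have hCb1 : -(M * δ₀) ≤ C := neg_le_of_abs_le hCb
      have hBb1 : B ≤ M * (t - (t₀ + δ₀)) := le_of_abs_le hBb
      have hBb2 : -(M * (t - (t₀ + δ₀))) ≤ B := neg_le_of_abs_le hBb
      have harith : (1 / (t - (t₀ + δ₀))) * B + (-(2 * M * δ₀) / (t - t₀))
          ≤ (1 / (t - t₀)) * (C + B) := by
        have heq : (1 / (t - t₀)) * (C + B) - ((1 / (t - (t₀ + δ₀))) * B + (-(2 * M * δ₀) / (t - t₀)))
            = ((t - (t₀ + δ₀)) * C - δ₀ * B + 2 * M * δ₀ * (t - (t₀ + δ₀)))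
              / ((t - t₀) * (t - (t₀ + δ₀))) := by
          field_simp
          ring
        have hnum : 0 ≤ (t - (t₀ + δ₀)) * C - δ₀ * B + 2 * M * δ₀ * (t - (t₀ + δ₀)) := by
          nlinarith
        have hfrac : 0 ≤ ((t - (t₀ + δ₀)) * C - δ₀ * B + 2 * M * δ₀ * (t - (t₀ + δ₀)))
            / ((t - t₀) * (t - (t₀ + δ₀))) := div_nonneg hnum (by positivity)
        linarith [heq ▸ hfrac]
      calc Jbar (t₀ + δ₀) t + (-(2 * M * δ₀) / (t - t₀))
          ≤ (1 / (t - (t₀ + δ₀))) * B + (-(2 * M * δ₀) / (t - t₀)) := by linarith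
        _ ≤ (1 / (t - t₀)) * (C + B) := harith
        _ = (1 / (t - t₀)) * ∫ τ in t₀..t, g τ := by rw [hsplit]
    have := (hJbar t₀ t ht0t).2 hlb
    linarith
  refine ⟨key t₁ (by linarith), ?_⟩
  intro Jinf Jinf' h1 h2
  have hdiff : Tendsto (fun t => Jbar t₀ t - Jbar (t₀ + δ₀) t) atTop (nhds (Jinf - Jinf')) :=
    h1.sub h2
  have hzero : Tendsto (fun t : ℝ => -(2 * M * δ₀) / (t - t₀)) atTop (nhds 0) := by
    apply Tendsto.div_atTop (tendsto_const_nhds)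
    exact tendsto_atTop_add_const_right _ _ tendsto_id
  have hle : Jinf - Jinf' ≥ 0 := by
    have h := le_of_tendsto_of_tendsto hzero hdiff ?_
    · linarith
    · filter_upwards [eventually_gt_atTop (t₀ + δ₀)] with t htt
      exact key t htt
  linarith
end

section
/- Suppose the family of problems is strictly dissipative at (y_s,u_s): there exist a storage function S with |S| ≤ M on E and a monotone increasing continuous function α: [0,∞) → [0,∞) with α(0)=0, α(ε)>0 for ε>0, such that S(y(0)) + ∫₀^τ (f⁰(y(t),u(t)) - f⁰(y_s,u_s)) dt ≥ S(y(τ)) + ∫₀^τ α(‖(y(t)-y_s, u(t)-u_s)‖) dt for all admissible pairs and τ ≤ T. If (y_s,u_s) is admissible on every [0,T] and (y^T,u^T) is optimal for the problem on [0,T], then for every ε > 0 the Lebesgue measure of Q_{ε,T} := {t ∈ [0,T] : ‖(y^T(t)-y_s, u^T(t)-u_s)‖ > ε} satisfies |Q_{ε,T}| ≤ 2M/α(ε), uniformly in T. -/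
open MeasureTheory Set

/-!
Comparing the optimal pair with the admissible stationary pair gives
`∫₀ᵀ (f⁰(y^T,u^T) - f⁰(y_s,u_s)) ≤ 0`. The dissipation inequality at `τ = T` then bounds
`∫₀ᵀ α(‖(y^T - y_s, u^T - u_s)‖)` by the oscillation `S(y^T(0)) - S(y^T(T)) ≤ 2M` of the storage
function, and Markov's inequality turns this into `α(ε) · |Q_{ε,T}| ≤ 2M`.
-/

theorem measure_ge_le_ofReal_div {Ω : Type*} [MeasurableSpace Ω] {μ : Measure Ω}
    [IsFiniteMeasure μ] {g : Ω → ℝ} (hg_nonneg : 0 ≤ᵐ[μ] g) (hg_int : Integrable g μ)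
    {c B : ℝ} (hc : 0 < c) (hB : ∫ x, g x ∂μ ≤ B) :
    μ {x | c ≤ g x} ≤ ENNReal.ofReal (B / c) := by
  rw [← ofReal_measureReal (measure_ne_top μ _)]
  refine ENNReal.ofReal_le_ofReal ((le_div_iff₀ hc).2 ?_)
  rw [mul_comm]
  exact (mul_meas_ge_le_integral_of_nonneg hg_nonneg hg_int c).trans hB

theorem intervalIntegral_sub_const_nonpos_of_average_le {φ : ℝ → ℝ} {T c : ℝ} (hT : 0 < T)
    (h : (1 / T) * ∫ t in (0:ℝ)..T, φ t ≤ c) : ∫ t in (0:ℝ)..T, (φ t - c) ≤ 0 := by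
  by_cases hφ : IntervalIntegrable φ volume 0 T
  · rw [intervalIntegral.integral_sub hφ intervalIntegrable_const,
      intervalIntegral.integral_const, sub_zero, smul_eq_mul, sub_nonpos]
    rwa [one_div, inv_mul_le_iff₀ hT] at h
  -- otherwise the integral on the left is the junk value `0`
  · have hφc : ¬IntervalIntegrable (fun t => φ t - c) volume 0 T := fun hφc => hφ <| by
      simpa using hφc.add (intervalIntegrable_const (c := c))
    rw [intervalIntegral.integral_undef hφc]

theorem average_intervalIntegral_const {T : ℝ} (hT : T ≠ 0) (c : ℝ) :
    (1 / T) * ∫ _ in (0:ℝ)..T, c = c := by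
  rw [intervalIntegral.integral_const, sub_zero, smul_eq_mul, ← mul_assoc, one_div,
    inv_mul_cancel₀ hT, one_mul]

theorem stmt_5_general
    {X U : Type*} [NormedAddCommGroup X] [NormedAddCommGroup U]
    (f0 : X → U → ℝ) (E : Set X)
    (Adm : ℝ → Set ((ℝ → X) × (ℝ → U)))  -- admissible pairs on [0,T]
    (hE : ∀ T > 0, ∀ p ∈ Adm T, ∀ t ∈ Icc (0:ℝ) T, p.1 t ∈ E)
    (ys : X) (us : U)
    (hstat : ∀ T > 0, ((fun _ : ℝ => ys), (fun _ : ℝ => us)) ∈ Adm T)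
    (S : X → ℝ) (M : ℝ)
    (hSbound : ∀ y ∈ E, |S y| ≤ M)
    (α : ℝ → ℝ) (hαmono : MonotoneOn α (Ici 0))
    (hα0 : α 0 = 0) (hαpos : ∀ ε > 0, 0 < α ε)
    -- strict dissipation inequality along every admissible pair
    (hdiss : ∀ T > 0, ∀ p ∈ Adm T, ∀ τ ∈ Icc (0:ℝ) T,
      S (p.1 0) + ∫ t in (0:ℝ)..τ, (f0 (p.1 t) (p.2 t) - f0 ys us) ≥
        S (p.1 τ) + ∫ t in (0:ℝ)..τ, α ‖(p.1 t - ys, p.2 t - us)‖)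
    (hintg : ∀ T > 0, ∀ p ∈ Adm T,
      IntegrableOn (fun t => α ‖(p.1 t - ys, p.2 t - us)‖) (Icc (0:ℝ) T))
    (JT : ℝ → ℝ)
    (hJT : ∀ T > 0, IsGLB
      {v : ℝ | ∃ p ∈ Adm T, v = (1 / T) * ∫ t in (0:ℝ)..T, f0 (p.1 t) (p.2 t)}
      (JT T)) :
    ∀ T > 0, ∀ p ∈ Adm T,
      (1 / T) * ∫ t in (0:ℝ)..T, f0 (p.1 t) (p.2 t) = JT T →  -- (y^T,u^T) optimal
      ∀ ε > 0,
        volume {t ∈ Icc (0:ℝ) T | ε < ‖(p.1 t - ys, p.2 t - us)‖} ≤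
          ENNReal.ofReal (2 * M / α ε) := by
  intro T hT p hp hopt ε hε
  have hJT_le : JT T ≤ f0 ys us :=
    (hJT T hT).1 ⟨_, hstat T hT, (average_intervalIntegral_const hT.ne' _).symm⟩
  have hcost : ∫ t in (0:ℝ)..T, (f0 (p.1 t) (p.2 t) - f0 ys us) ≤ 0 :=
    intervalIntegral_sub_const_nonpos_of_average_le hT (hopt.trans_le hJT_le)
  have hS0 := abs_le.1 (hSbound _ (hE T hT p hp 0 (left_mem_Icc.2 hT.le)))
  have hST := abs_le.1 (hSbound _ (hE T hT p hp T (right_mem_Icc.2 hT.le)))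
  have hdissT := hdiss T hT p hp T (right_mem_Icc.2 hT.le)
  have hα_int : ∫ t in Icc (0:ℝ) T, α ‖(p.1 t - ys, p.2 t - us)‖ ≤ 2 * M := by
    rw [integral_Icc_eq_integral_Ioc, ← intervalIntegral.integral_of_le hT.le]
    linarith
  have hα_nonneg : ∀ t, 0 ≤ α ‖(p.1 t - ys, p.2 t - us)‖ := fun t =>
    hα0 ▸ hαmono self_mem_Ici (norm_nonneg _) (norm_nonneg _)
  calc volume {t ∈ Icc (0:ℝ) T | ε < ‖(p.1 t - ys, p.2 t - us)‖}
      = volume.restrict (Icc 0 T) {t ∈ Icc (0:ℝ) T | ε < ‖(p.1 t - ys, p.2 t - us)‖} :=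
        (Measure.restrict_eq_self _ (sep_subset _ _)).symm
    _ ≤ volume.restrict (Icc 0 T) {t | α ε ≤ α ‖(p.1 t - ys, p.2 t - us)‖} :=
        measure_mono fun t ht => hαmono hε.le (norm_nonneg _) ht.2.le
    _ ≤ ENNReal.ofReal (2 * M / α ε) :=
        measure_ge_le_ofReal_div (.of_forall hα_nonneg) (hintg T hT p hp) (hαpos ε hε) hα_int

/-- Strict dissipativity implies the measure-turnpike property: the set of times at which
an optimal pair `(y^T,u^T)` leaves an `ε`-neighborhood of `(y_s,u_s)` has Lebesgue
measure at most `2M/α(ε)`, uniformly in the horizon `T`. -/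
theorem stmt_5
    {X U : Type*} [NormedAddCommGroup X] [NormedAddCommGroup U]
    (f0 : X → U → ℝ) (E : Set X)
    (Adm : ℝ → Set ((ℝ → X) × (ℝ → U)))  -- admissible pairs on [0,T]
    (hE : ∀ T > 0, ∀ p ∈ Adm T, ∀ t ∈ Icc (0:ℝ) T, p.1 t ∈ E)
    (ys : X) (us : U)
    (hstat : ∀ T > 0, ((fun _ : ℝ => ys), (fun _ : ℝ => us)) ∈ Adm T)
    (S : X → ℝ) (M : ℝ) (hM : 0 < M)
    (hSbound : ∀ y ∈ E, |S y| ≤ M)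
    (α : ℝ → ℝ) (hαmono : MonotoneOn α (Ici 0)) (hαcont : ContinuousOn α (Ici 0))
    (hα0 : α 0 = 0) (hαpos : ∀ ε > 0, 0 < α ε)
    -- strict dissipation inequality along every admissible pair
    (hdiss : ∀ T > 0, ∀ p ∈ Adm T, ∀ τ ∈ Icc (0:ℝ) T,
      S (p.1 0) + ∫ t in (0:ℝ)..τ, (f0 (p.1 t) (p.2 t) - f0 ys us) ≥
        S (p.1 τ) + ∫ t in (0:ℝ)..τ, α ‖(p.1 t - ys, p.2 t - us)‖)
    (hintg : ∀ T > 0, ∀ p ∈ Adm T,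
      IntegrableOn (fun t => α ‖(p.1 t - ys, p.2 t - us)‖) (Icc (0:ℝ) T))
    (hmeas : ∀ T > 0, ∀ p ∈ Adm T,
      Measurable (fun t => ‖(p.1 t - ys, p.2 t - us)‖))
    (JT : ℝ → ℝ)
    (hJT : ∀ T > 0, IsGLB
      {v : ℝ | ∃ p ∈ Adm T, v = (1 / T) * ∫ t in (0:ℝ)..T, f0 (p.1 t) (p.2 t)}
      (JT T)) :
    ∀ T > 0, ∀ p ∈ Adm T,
      (1 / T) * ∫ t in (0:ℝ)..T, f0 (p.1 t) (p.2 t) = JT T →  -- (y^T,u^T) optimal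
      ∀ ε > 0,
        volume {t ∈ Icc (0:ℝ) T | ε < ‖(p.1 t - ys, p.2 t - us)‖} ≤
          ENNReal.ofReal (2 * M / α ε) :=
  stmt_5_general f0 E Adm hE ys us hstat S M hSbound α hαmono hα0 hαpos hdiss hintg JT hJT
end

section
/- Suppose the static problem has the strong duality property: there exists φ_s such that the Lagrangian L(y,u) := f⁰(y,u) + ⟨A*φ_s, y⟩ + ⟨φ_s, f(y,u)⟩ satisfies L(y,u) ≥ L(y_s,u_s) = f⁰(y_s,u_s) for all (y,u) ∈ E × F. Then for any mild solution (y(·),u(·)) of the evolution equation with values in E × F on [0,T], the function S(y) := -⟨φ_s, y⟩ is a storage function: S(y(0)) + ∫₀^τ (f⁰(y(t),u(t)) - f⁰(y_s,u_s)) dt ≥ S(y(τ)) for all τ ∈ [0,T]. -/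
open MeasureTheory Set

/-! Testing the weak formulation against `φ_s` turns `S(y(τ)) - S(y(0))` into minus the integral
of the supply `⟨A*φ_s, y⟩ + ⟨φ_s, f(y,u)⟩`. Since the steady state has zero supply, strong duality
says exactly that the cost excess `f⁰(y,u) - f⁰(y_s,u_s)` plus the supply is nonnegative on
`E × F`; integrating this pointwise inequality along the trajectory gives the dissipation
inequality. -/

theorem intervalIntegral.neg_integral_le_integral_of_add_nonneg {g h : ℝ → ℝ} {a b : ℝ}
    (hab : a ≤ b) (hg : IntervalIntegrable g volume a b) (hh : IntervalIntegrable h volume a b)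
    (hgh : ∀ t ∈ Icc a b, 0 ≤ g t + h t) :
    -∫ t in a..b, h t ≤ ∫ t in a..b, g t := by
  rw [← intervalIntegral.integral_neg]
  exact intervalIntegral.integral_mono_on hab hh.neg hg fun t ht => by
    linarith [hgh t ht]

theorem MeasureTheory.IntegrableOn.intervalIntegrable_of_mem_Icc {g : ℝ → ℝ} {T τ : ℝ}
    (hg : IntegrableOn g (Icc 0 T)) (hτ : τ ∈ Icc 0 T) : IntervalIntegrable g volume 0 τ :=
  (intervalIntegrable_iff_integrableOn_Icc_of_le hτ.1).2 (hg.mono_set (Icc_subset_Icc_right hτ.2))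

theorem stmt_7_general
    {X U : Type*} [NormedAddCommGroup X] [NormedSpace ℝ X]
    (f0 : X → U → ℝ) (f : X → U → X) (E : Set X) (F : Set U)
    (ys : X) (us : U)
    (φs : X →L[ℝ] ℝ)       -- Lagrange multiplier
    (Aφ : X →L[ℝ] ℝ)       -- the functional y ↦ ⟨A*φ_s, y⟩
    -- (y_s,u_s) is a steady state in the weak sense (tested against φ_s)
    (hsteady : Aφ ys + φs (f ys us) = 0)
    -- strong duality: (y_s,u_s) minimizes the Lagrangian on E × F
    (hSD : ∀ y ∈ E, ∀ u ∈ F,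
      f0 y u + Aφ y + φs (f y u) ≥ f0 ys us + Aφ ys + φs (f ys us))
    (T : ℝ) (y : ℝ → X) (u : ℝ → U)
    -- (y,u) takes values in E × F
    (hyE : ∀ t ∈ Icc (0:ℝ) T, y t ∈ E) (huF : ∀ t ∈ Icc (0:ℝ) T, u t ∈ F)
    -- mild/weak solution of ẏ = Ay + f(y,u), tested against φ_s
    (hmild : ∀ τ ∈ Icc (0:ℝ) T,
      φs (y τ) - φs (y 0) = ∫ t in (0:ℝ)..τ, (Aφ (y t) + φs (f (y t) (u t))))
    (hintg : IntegrableOn (fun t => f0 (y t) (u t)) (Icc (0:ℝ) T))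
    (hintg' : IntegrableOn (fun t => Aφ (y t) + φs (f (y t) (u t))) (Icc (0:ℝ) T)) :
    ∀ τ ∈ Icc (0:ℝ) T,
      (-(φs (y 0))) + ∫ t in (0:ℝ)..τ, (f0 (y t) (u t) - f0 ys us) ≥ -(φs (y τ)) := by
  intro τ hτ
  have hsub : Icc 0 τ ⊆ Icc 0 T := Icc_subset_Icc_right hτ.2
  have hcost : IntervalIntegrable (fun t => f0 (y t) (u t) - f0 ys us) volume 0 τ :=
    (hintg.intervalIntegrable_of_mem_Icc hτ).sub intervalIntegrable_const
  have hgap : ∀ t ∈ Icc 0 τ,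
      0 ≤ (f0 (y t) (u t) - f0 ys us) + (Aφ (y t) + φs (f (y t) (u t))) := fun t ht => by
    linarith [hSD _ (hyE t (hsub ht)) _ (huF t (hsub ht))]
  have hdiss := intervalIntegral.neg_integral_le_integral_of_add_nonneg hτ.1 hcost
    (hintg'.intervalIntegrable_of_mem_Icc hτ) hgap
  linarith [hmild τ hτ]

/-- Strong duality for the static problem implies dissipativity of the dynamic problem
with the linear storage function `S(y) = -⟨φ_s, y⟩`. -/
theorem stmt_7
    {X U : Type*} [NormedAddCommGroup X] [NormedSpace ℝ X]
    (f0 : X → U → ℝ) (f : X → U → X) (E : Set X) (F : Set U)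
    (ys : X) (us : U) (hys : ys ∈ E) (hus : us ∈ F)
    (φs : X →L[ℝ] ℝ)       -- Lagrange multiplier
    (Aφ : X →L[ℝ] ℝ)       -- the functional y ↦ ⟨A*φ_s, y⟩
    -- (y_s,u_s) is a steady state in the weak sense (tested against φ_s)
    (hsteady : Aφ ys + φs (f ys us) = 0)
    -- strong duality: (y_s,u_s) minimizes the Lagrangian on E × F
    (hSD : ∀ y ∈ E, ∀ u ∈ F,
      f0 y u + Aφ y + φs (f y u) ≥ f0 ys us + Aφ ys + φs (f ys us))
    (T : ℝ) (hT : 0 < T) (y : ℝ → X) (u : ℝ → U)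
    -- (y,u) takes values in E × F
    (hyE : ∀ t ∈ Icc (0:ℝ) T, y t ∈ E) (huF : ∀ t ∈ Icc (0:ℝ) T, u t ∈ F)
    -- mild/weak solution of ẏ = Ay + f(y,u), tested against φ_s
    (hmild : ∀ τ ∈ Icc (0:ℝ) T,
      φs (y τ) - φs (y 0) = ∫ t in (0:ℝ)..τ, (Aφ (y t) + φs (f (y t) (u t))))
    (hintg : IntegrableOn (fun t => f0 (y t) (u t)) (Icc (0:ℝ) T))
    (hintg' : IntegrableOn (fun t => Aφ (y t) + φs (f (y t) (u t))) (Icc (0:ℝ) T)) :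
    ∀ τ ∈ Icc (0:ℝ) T,
      (-(φs (y 0))) + ∫ t in (0:ℝ)..τ, (f0 (y t) (u t) - f0 ys us) ≥ -(φs (y τ)) :=
  stmt_7_general f0 f E F ys us φs Aφ hsteady hSD T y u hyE huF hmild hintg hintg'
end

section
/- Suppose the static problem has the strict strong duality property: there exist φ_s and a monotone increasing continuous α with α(0)=0 such that L(y,u) ≥ L(y_s,u_s) + α(‖(y-y_s, u-u_s)‖) for all (y,u) ∈ E × F, where L(y,u) = f⁰(y,u) + ⟨A*φ_s,y⟩ + ⟨φ_s, f(y,u)⟩. Then the dynamic problem is strictly dissipative at (y_s,u_s) with storage function S(y) = -⟨φ_s,y⟩ and dissipation rate α: for any admissible pair, S(y(0)) + ∫₀^τ (f⁰(y,u) - f⁰(y_s,u_s)) dt ≥ S(y(τ)) + ∫₀^τ α(‖(y(t)-y_s, u(t)-u_s)‖) dt. -/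
/-!
At each time, strict strong duality evaluated at `(y t, u t)`, together with the steady-state
equation `⟨A*φ_s, y_s⟩ + ⟨φ_s, f(y_s, u_s)⟩ = 0`, bounds `α ‖(y t - y_s, u t - u_s)‖` by the supply
rate `f⁰(y t, u t) - f⁰(y_s, u_s)` plus `⟨A*φ_s, y t⟩ + ⟨φ_s, f(y t, u t)⟩`. Integrating over
`[0, τ]`, the weak formulation tested against `φ_s` turns the integral of the last term into
`⟨φ_s, y τ⟩ - ⟨φ_s, y 0⟩ = S(y 0) - S(y τ)`.
-/

open MeasureTheory Set

theorem le_supply_add_of_strictStrongDuality {X U : Type*} [NormedAddCommGroup X]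
    [NormedSpace ℝ X] [NormedAddCommGroup U] {f0 : X → U → ℝ} {f : X → U → X} {E : Set X}
    {F : Set U} {ys : X} {us : U} {φs Aφ : X →L[ℝ] ℝ} {α : ℝ → ℝ}
    (hsteady : Aφ ys + φs (f ys us) = 0)
    (hSSD : ∀ y ∈ E, ∀ u ∈ F,
      f0 y u + Aφ y + φs (f y u) ≥ (f0 ys us + Aφ ys + φs (f ys us)) + α ‖(y - ys, u - us)‖)
    {y : X} (hy : y ∈ E) {u : U} (hu : u ∈ F) :
    α ‖(y - ys, u - us)‖ ≤ (f0 y u - f0 ys us) + (Aφ y + φs (f y u)) := by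
  have := hSSD y hy u hu
  linarith

theorem intervalIntegral.integral_le_add_integral_of_le_add {a b : ℝ} (hab : a ≤ b)
    {w l d : ℝ → ℝ} (hw : IntervalIntegrable w volume a b) (hl : IntervalIntegrable l volume a b)
    (hd : IntervalIntegrable d volume a b) (h : ∀ t ∈ Icc a b, w t ≤ l t + d t) :
    ∫ t in a..b, w t ≤ (∫ t in a..b, l t) + ∫ t in a..b, d t := by
  rw [← intervalIntegral.integral_add hl hd]
  exact intervalIntegral.integral_mono_on hab hw (hl.add hd) h

theorem stmt_8_general
    {X U : Type*} [NormedAddCommGroup X] [NormedSpace ℝ X] [NormedAddCommGroup U]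
    (f0 : X → U → ℝ) (f : X → U → X) (E : Set X) (F : Set U)
    (ys : X) (us : U)
    (φs : X →L[ℝ] ℝ)       -- Lagrange multiplier
    (Aφ : X →L[ℝ] ℝ)       -- the functional y ↦ ⟨A*φ_s, y⟩
    (hsteady : Aφ ys + φs (f ys us) = 0)
    (α : ℝ → ℝ)
    -- strict strong duality: L(y,u) ≥ L(y_s,u_s) + α(‖(y-y_s,u-u_s)‖) on E × F
    (hSSD : ∀ y ∈ E, ∀ u ∈ F,
      f0 y u + Aφ y + φs (f y u) ≥
        (f0 ys us + Aφ ys + φs (f ys us)) + α ‖(y - ys, u - us)‖)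
    (T : ℝ) (y : ℝ → X) (u : ℝ → U)
    (hyE : ∀ t ∈ Icc (0:ℝ) T, y t ∈ E) (huF : ∀ t ∈ Icc (0:ℝ) T, u t ∈ F)
    -- mild/weak solution of ẏ = Ay + f(y,u), tested against φ_s
    (hmild : ∀ τ ∈ Icc (0:ℝ) T,
      φs (y τ) - φs (y 0) = ∫ t in (0:ℝ)..τ, (Aφ (y t) + φs (f (y t) (u t))))
    (hintg : IntegrableOn (fun t => f0 (y t) (u t)) (Icc (0:ℝ) T))
    (hintg' : IntegrableOn (fun t => Aφ (y t) + φs (f (y t) (u t))) (Icc (0:ℝ) T))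
    (hintgα : IntegrableOn (fun t => α ‖(y t - ys, u t - us)‖) (Icc (0:ℝ) T)) :
    ∀ τ ∈ Icc (0:ℝ) T,
      (-(φs (y 0))) + ∫ t in (0:ℝ)..τ, (f0 (y t) (u t) - f0 ys us) ≥
        (-(φs (y τ))) + ∫ t in (0:ℝ)..τ, α ‖(y t - ys, u t - us)‖ := by
  intro τ hτ
  have hsub : Icc 0 τ ⊆ Icc 0 T := Icc_subset_Icc_right hτ.2
  have restrict {g : ℝ → ℝ} (hg : IntegrableOn g (Icc 0 T)) : IntervalIntegrable g volume 0 τ :=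
    (hg.mono_set (by rwa [uIcc_of_le hτ.1])).intervalIntegrable
  have hdiss := intervalIntegral.integral_le_add_integral_of_le_add hτ.1 (restrict hintgα)
    ((restrict hintg).sub intervalIntegrable_const) (restrict hintg') fun t ht =>
      le_supply_add_of_strictStrongDuality hsteady hSSD (hyE t (hsub ht)) (huF t (hsub ht))
  rw [← hmild τ hτ] at hdiss
  linarith

/-- Strict strong duality for the static problem implies strict dissipativity of the
dynamic problem, with storage function `S(y) = -⟨φ_s, y⟩` and dissipation rate `α`. -/
theorem stmt_8
    {X U : Type*} [NormedAddCommGroup X] [NormedSpace ℝ X] [NormedAddCommGroup U]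
    (f0 : X → U → ℝ) (f : X → U → X) (E : Set X) (F : Set U)
    (ys : X) (us : U) (hys : ys ∈ E) (hus : us ∈ F)
    (φs : X →L[ℝ] ℝ)       -- Lagrange multiplier
    (Aφ : X →L[ℝ] ℝ)       -- the functional y ↦ ⟨A*φ_s, y⟩
    (hsteady : Aφ ys + φs (f ys us) = 0)
    (α : ℝ → ℝ) (hαmono : MonotoneOn α (Ici 0)) (hαcont : ContinuousOn α (Ici 0))
    (hα0 : α 0 = 0)
    -- strict strong duality: L(y,u) ≥ L(y_s,u_s) + α(‖(y-y_s,u-u_s)‖) on E × F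
    (hSSD : ∀ y ∈ E, ∀ u ∈ F,
      f0 y u + Aφ y + φs (f y u) ≥
        (f0 ys us + Aφ ys + φs (f ys us)) + α ‖(y - ys, u - us)‖)
    (T : ℝ) (hT : 0 < T) (y : ℝ → X) (u : ℝ → U)
    (hyE : ∀ t ∈ Icc (0:ℝ) T, y t ∈ E) (huF : ∀ t ∈ Icc (0:ℝ) T, u t ∈ F)
    -- mild/weak solution of ẏ = Ay + f(y,u), tested against φ_s
    (hmild : ∀ τ ∈ Icc (0:ℝ) T,
      φs (y τ) - φs (y 0) = ∫ t in (0:ℝ)..τ, (Aφ (y t) + φs (f (y t) (u t))))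
    (hintg : IntegrableOn (fun t => f0 (y t) (u t)) (Icc (0:ℝ) T))
    (hintg' : IntegrableOn (fun t => Aφ (y t) + φs (f (y t) (u t))) (Icc (0:ℝ) T))
    (hintgα : IntegrableOn (fun t => α ‖(y t - ys, u t - us)‖) (Icc (0:ℝ) T)) :
    ∀ τ ∈ Icc (0:ℝ) T,
      (-(φs (y 0))) + ∫ t in (0:ℝ)..τ, (f0 (y t) (u t) - f0 ys us) ≥
        (-(φs (y τ))) + ∫ t in (0:ℝ)..τ, α ‖(y t - ys, u t - us)‖ :=
  stmt_8_general f0 f E F ys us φs Aφ hsteady α hSSD T y u hyE huF hmild hintg hintg' hintgα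
end

section
/- Suppose the problems are dissipative with respect to a Π-periodic admissible trajectory (ȳ(·), ū(·)) with Π-periodic storage function S(t,y) bounded in absolute value by M: S(τ₀, y(τ₀)) + ∫_{τ₀}^{τ₁} (f⁰(t,y(t),u(t)) - f⁰(t,ȳ(t),ū(t))) dt ≥ S(τ₁, y(τ₁)) for all admissible pairs and τ₀ < τ₁. Let J̄_per = (1/Π)∫₀^Π f⁰(t,ȳ(t),ū(t)) dt. Then for every admissible pair (y,u) on [t₀, t₀ + kΠ], J̄_per ≤ (1/(kΠ))∫_{t₀}^{t₀+kΠ} f⁰(t,y(t),u(t)) dt + 2M/(kΠ); consequently J̄_per ≤ J̄_{[t₀,+∞)}, and since (ȳ,ū) is itself admissible, J̄_{[t₀,+∞)} = J̄_per. -/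
open MeasureTheory Set Filter

/-!
Along any admissible pair on `[t₀, t₀ + kΠ]`, the dissipation inequality on the whole interval
bounds the excess of the periodic cost over the pair's cost by the oscillation of the storage
function, at most `2M`; dividing by `kΠ` gives the averaged bound, since the average of the
periodic cost over `k` whole periods is `J̄_per`. Hence `J̄_{[t₀, t₀ + kΠ]}` lies in
`[J̄_per - 2M/(kΠ), J̄_per]`, the upper bound coming from the periodic pair itself, and letting
`k → ∞` identifies the limit value.
-/

theorem Function.Periodic.intervalIntegral_add_nat_mul_eq {f : ℝ → ℝ} {T : ℝ}
    (hf : Function.Periodic f T) (hint : ∀ a b, IntervalIntegrable f volume a b) (t : ℝ) (k : ℕ) :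
    ∫ x in t..t + k * T, f x = k * ∫ x in 0..T, f x := by
  have h := hf.intervalIntegral_add_zsmul_eq k t hint
  rw [hf.intervalIntegral_add_eq t 0, zero_add] at h
  simpa only [zsmul_eq_mul, Int.cast_natCast] using h

theorem integral_le_integral_add_of_abs_le {f g : ℝ → ℝ} {a b s₀ s₁ M : ℝ}
    (hf : IntervalIntegrable f volume a b) (hg : IntervalIntegrable g volume a b)
    (hs₀ : |s₀| ≤ M) (hs₁ : |s₁| ≤ M) (hdiss : s₀ + ∫ t in a..b, (f t - g t) ≥ s₁) :
    ∫ t in a..b, g t ≤ (∫ t in a..b, f t) + 2 * M := by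
  rw [intervalIntegral.integral_sub hf hg] at hdiss
  linarith [abs_le.1 hs₀, abs_le.1 hs₁]

theorem eq_of_tendsto_of_sub_le_of_le {u ε : ℕ → ℝ} {L c : ℝ} (hu : Tendsto u atTop (nhds L))
    (hε : Tendsto ε atTop (nhds 0)) (hlow : ∀ᶠ k in atTop, c - ε k ≤ u k)
    (hup : ∀ᶠ k in atTop, u k ≤ c) : L = c := by
  refine tendsto_nhds_unique hu (tendsto_of_tendsto_of_tendsto_of_le_of_le' ?_
    tendsto_const_nhds hlow hup)
  simpa using tendsto_const_nhds.sub hε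

theorem stmt_14_general
    {X U : Type*}
    (f0 : ℝ → X → U → ℝ)
    (Adm : ℝ → ℝ → Set ((ℝ → X) × (ℝ → U)))  -- admissible pairs on [a,b]
    (Per : ℝ) (hPer : 0 < Per)
    (ybar : ℝ → X) (ubar : ℝ → U)
    -- the periodic trajectory is admissible on every interval
    (hadm_per : ∀ a b : ℝ, a < b → (ybar, ubar) ∈ Adm a b)
    -- the running cost along the periodic trajectory is Π-periodic and integrable
    (hper : Function.Periodic (fun t => f0 t (ybar t) (ubar t)) Per)
    (hintper : IntegrableOn (fun t => f0 t (ybar t) (ubar t)) (Icc 0 Per))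
    (hintg : ∀ a b : ℝ, a < b → ∀ p ∈ Adm a b,
      IntegrableOn (fun t => f0 t (p.1 t) (p.2 t)) (Icc a b))
    (Jper : ℝ) (hJper : Jper = (1 / Per) * ∫ t in (0:ℝ)..Per, f0 t (ybar t) (ubar t))
    (S : ℝ → X → ℝ) (M : ℝ)
    (hSbound : ∀ t : ℝ, ∀ y : X, |S t y| ≤ M)
    -- dissipation inequality with respect to the periodic trajectory
    (hdiss : ∀ a b : ℝ, a < b → ∀ p ∈ Adm a b, ∀ τ₀ τ₁ : ℝ,
      a ≤ τ₀ → τ₀ < τ₁ → τ₁ ≤ b →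
      S τ₀ (p.1 τ₀) +
          ∫ t in τ₀..τ₁, (f0 t (p.1 t) (p.2 t) - f0 t (ybar t) (ubar t)) ≥
        S τ₁ (p.1 τ₁))
    (t₀ : ℝ)
    (Jbar : ℝ → ℝ) (Jinf : ℝ)
    -- J̄_{[t₀,t₁]} is the infimum of the time-averaged cost over admissible pairs
    (hJbar : ∀ t₁ > t₀, IsGLB
      {v : ℝ | ∃ p ∈ Adm t₀ t₁,
        v = (1 / (t₁ - t₀)) * ∫ t in t₀..t₁, f0 t (p.1 t) (p.2 t)} (Jbar t₁))
    (hJlim : Tendsto Jbar atTop (nhds Jinf)) :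
    (∀ k : ℕ, 0 < k → ∀ p ∈ Adm t₀ (t₀ + k * Per),
      Jper ≤ (1 / (k * Per)) * (∫ t in t₀..(t₀ + k * Per), f0 t (p.1 t) (p.2 t))
        + 2 * M / (k * Per)) ∧
    Jper ≤ Jinf ∧ Jinf = Jper := by
  set g : ℝ → ℝ := fun t => f0 t (ybar t) (ubar t)
  have hg : ∀ a b, IntervalIntegrable g volume a b := hper.intervalIntegrable₀ hPer.ne'
    ((intervalIntegrable_iff_integrableOn_Icc_of_le hPer.le).2 hintper)
  have hmean : ∀ k : ℕ, 0 < k → Jper = (1 / (k * Per)) * ∫ t in t₀..t₀ + k * Per, g t := by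
    intro k hk
    rw [hJper, hper.intervalIntegral_add_nat_mul_eq hg]
    field_simp
  have hbound : ∀ k : ℕ, 0 < k → ∀ p ∈ Adm t₀ (t₀ + k * Per),
      Jper ≤ (1 / (k * Per)) * (∫ t in t₀..(t₀ + k * Per), f0 t (p.1 t) (p.2 t))
        + 2 * M / (k * Per) := by
    intro k hk p hp
    have hab : t₀ < t₀ + k * Per := lt_add_of_pos_right t₀ (by positivity)
    have hf := (intervalIntegrable_iff_integrableOn_Icc_of_le hab.le).2 (hintg _ _ hab p hp)
    have hint := integral_le_integral_add_of_abs_le hf (hg _ _) (hSbound _ _) (hSbound _ _)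
      (hdiss _ _ hab p hp _ _ le_rfl hab le_rfl)
    rw [hmean k hk, div_eq_mul_one_div (2 * M), mul_comm (2 * M), ← mul_add]
    exact mul_le_mul_of_nonneg_left hint (by positivity)
  have hJbar_mem : ∀ k : ℕ, 0 < k →
      Jper - 2 * M / (k * Per) ≤ Jbar (t₀ + k * Per) ∧ Jbar (t₀ + k * Per) ≤ Jper := by
    intro k hk
    have hab : t₀ < t₀ + k * Per := lt_add_of_pos_right t₀ (by positivity)
    have hglb := hJbar _ hab
    simp only [add_sub_cancel_left] at hglb
    refine ⟨hglb.2 ?_, hglb.1 ⟨(ybar, ubar), hadm_per _ _ hab, hmean k hk⟩⟩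
    rintro v ⟨p, hp, rfl⟩
    linarith [hbound k hk p hp]
  have hlim : Jinf = Jper := by
    have hkPer := tendsto_natCast_atTop_atTop.atTop_mul_const hPer
    refine eq_of_tendsto_of_sub_le_of_le (hJlim.comp (tendsto_atTop_add_const_left _ t₀ hkPer))
      (tendsto_const_nhds (x := 2 * M) |>.div_atTop hkPer) ?_ ?_ <;>
      filter_upwards [eventually_gt_atTop 0] with k hk
    exacts [(hJbar_mem k hk).1, (hJbar_mem k hk).2]
  exact ⟨hbound, hlim.ge, hlim⟩

/-- Dissipativity with respect to a Π-periodic trajectory identifies the limit value: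
`J̄_per ≤ (1/(kΠ)) ∫_{t₀}^{t₀+kΠ} f⁰(t,y,u) dt + 2M/(kΠ)` for all admissible pairs, hence
`J̄_per ≤ J̄_{[t₀,∞)}`, and admissibility of the periodic trajectory gives equality. -/
theorem stmt_14
    {X U : Type*}
    (f0 : ℝ → X → U → ℝ)
    (Adm : ℝ → ℝ → Set ((ℝ → X) × (ℝ → U)))  -- admissible pairs on [a,b]
    (Per : ℝ) (hPer : 0 < Per)
    (ybar : ℝ → X) (ubar : ℝ → U)
    -- the periodic trajectory is admissible on every interval
    (hadm_per : ∀ a b : ℝ, a < b → (ybar, ubar) ∈ Adm a b)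
    -- the running cost along the periodic trajectory is Π-periodic and integrable
    (hper : Function.Periodic (fun t => f0 t (ybar t) (ubar t)) Per)
    (hintper : IntegrableOn (fun t => f0 t (ybar t) (ubar t)) (Icc 0 Per))
    (hintg : ∀ a b : ℝ, a < b → ∀ p ∈ Adm a b,
      IntegrableOn (fun t => f0 t (p.1 t) (p.2 t)) (Icc a b))
    (Jper : ℝ) (hJper : Jper = (1 / Per) * ∫ t in (0:ℝ)..Per, f0 t (ybar t) (ubar t))
    (S : ℝ → X → ℝ) (M : ℝ) (hM : 0 < M)
    (hSbound : ∀ t : ℝ, ∀ y : X, |S t y| ≤ M)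
    (hSper : ∀ t : ℝ, ∀ y : X, S (t + Per) y = S t y)
    -- dissipation inequality with respect to the periodic trajectory
    (hdiss : ∀ a b : ℝ, a < b → ∀ p ∈ Adm a b, ∀ τ₀ τ₁ : ℝ,
      a ≤ τ₀ → τ₀ < τ₁ → τ₁ ≤ b →
      S τ₀ (p.1 τ₀) +
          ∫ t in τ₀..τ₁, (f0 t (p.1 t) (p.2 t) - f0 t (ybar t) (ubar t)) ≥
        S τ₁ (p.1 τ₁))
    (t₀ : ℝ)
    (Jbar : ℝ → ℝ) (Jinf : ℝ)
    -- J̄_{[t₀,t₁]} is the infimum of the time-averaged cost over admissible pairs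
    (hJbar : ∀ t₁ > t₀, IsGLB
      {v : ℝ | ∃ p ∈ Adm t₀ t₁,
        v = (1 / (t₁ - t₀)) * ∫ t in t₀..t₁, f0 t (p.1 t) (p.2 t)} (Jbar t₁))
    (hJlim : Tendsto Jbar atTop (nhds Jinf)) :
    (∀ k : ℕ, 0 < k → ∀ p ∈ Adm t₀ (t₀ + k * Per),
      Jper ≤ (1 / (k * Per)) * (∫ t in t₀..(t₀ + k * Per), f0 t (p.1 t) (p.2 t))
        + 2 * M / (k * Per)) ∧
    Jper ≤ Jinf ∧ Jinf = Jper :=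
  stmt_14_general f0 Adm Per hPer ybar ubar hadm_per hper hintper hintg Jper hJper S M hSbound hdiss
    t₀ Jbar Jinf hJbar hJlim
end

section
/- In the setting of Theorem 2.1, assume additionally (H₄): for every initial point ŷ and every optimal trajectory ŷ(·) of the constrained problem starting at ŷ, V_{[t₀,t₁]}(ŷ) ≥ inf_{y} V_{[t₀,t₁]}(y) + (1/(t₁-t₀))∫_{t₀}^{t₁} β(dist(ŷ(t), 𝒯)) dt + o(1) as t₁ → ∞, where β is a 𝒦-class function. Then every optimal trajectory y(·) of the constrained problem satisfies the integral-turnpike property: lim_{t₁→+∞} (1/(t₁-t₀))∫_{t₀}^{t₁} β(dist(y(t), 𝒯)) dt = 0. -/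
open MeasureTheory Set Filter Metric

/-- Theorem 2.1(ii): under (H₄) and the convergence of the constrained and free optimal
values to a common limit, every family of optimal trajectories satisfies the
integral-turnpike property `lim (1/(t₁-t₀)) ∫ β(dist(y(t),𝒯)) dt = 0`. -/
theorem stmt_16
    {X : Type*} [MetricSpace X]
    (t₀ : ℝ) (𝒯 : Set X) (h𝒯closed : IsClosed 𝒯) (h𝒯ne : 𝒯.Nonempty)
    -- 𝒦-class coercivity function β
    (β : ℝ → ℝ) (hβmono : MonotoneOn β (Ici 0)) (hβcont : ContinuousOn β (Ici 0))
    (hβ0 : β 0 = 0) (hβnonneg : ∀ r ≥ (0:ℝ), 0 ≤ β r)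
    -- Opt t₁ y : "y is an optimal trajectory of the constrained problem on [t₀,t₁]"
    (Opt : ℝ → (ℝ → X) → Prop)
    (J Jbar : ℝ → ℝ) (V : ℝ → X → ℝ) (Jinf : ℝ)
    -- both optimal values converge to the common limit J̄_{[t₀,∞)}
    (hJlim : Tendsto J atTop (nhds Jinf))
    (hJbarlim : Tendsto Jbar atTop (nhds Jinf))
    -- the optimal pair is admissible from its own initial point: V ≤ J
    (hVJ : ∀ t₁ > t₀, ∀ y : ℝ → X, Opt t₁ y → V t₁ (y t₀) ≤ J t₁)
    -- inf_y V_{[t₀,t₁]}(y) = J̄_{[t₀,t₁]}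
    (hinfV : ∀ t₁ > t₀, ∀ x : X, Jbar t₁ ≤ V t₁ x)
    -- (H₄): coercivity, with error term o(1) as t₁ → ∞
    (o : ℝ → ℝ) (holim : Tendsto o atTop (nhds 0))
    (hH4 : ∀ t₁ > t₀, ∀ y : ℝ → X, Opt t₁ y →
      V t₁ (y t₀) ≥ Jbar t₁
        + (1 / (t₁ - t₀)) * (∫ t in t₀..t₁, β (infDist (y t) 𝒯)) + o t₁)
    -- integrability of the coercivity term along optimal trajectories
    (hintg : ∀ t₁ > t₀, ∀ y : ℝ → X, Opt t₁ y →
      IntegrableOn (fun t => β (infDist (y t) 𝒯)) (Icc t₀ t₁))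
    -- a family of optimal trajectories
    (yT : ℝ → ℝ → X) (hyT : ∀ t₁ > t₀, Opt t₁ (yT t₁)) :
    Tendsto (fun t₁ => (1 / (t₁ - t₀)) * ∫ t in t₀..t₁, β (infDist (yT t₁ t) 𝒯))
      atTop (nhds 0) := by
  have hsq : Tendsto (fun t₁ => J t₁ - Jbar t₁ - o t₁) atTop (nhds 0) := by
    have := (hJlim.sub hJbarlim).sub holim
    simpa using this
  apply squeeze_zero' (f := fun t₁ => (1 / (t₁ - t₀)) * ∫ t in t₀..t₁, β (infDist (yT t₁ t) 𝒯))
    (g := fun t₁ => J t₁ - Jbar t₁ - o t₁) ?_ ?_ hsq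
  · filter_upwards [eventually_gt_atTop t₀] with t₁ ht
    have hpos : 0 < 1 / (t₁ - t₀) := one_div_pos.mpr (sub_pos.mpr ht)
    have hint : 0 ≤ ∫ t in t₀..t₁, β (infDist (yT t₁ t) 𝒯) := by
      apply intervalIntegral.integral_nonneg ht.le
      intro u _
      exact hβnonneg _ (infDist_nonneg)
    exact mul_nonneg hpos.le hint
  · filter_upwards [eventually_gt_atTop t₀] with t₁ ht
    have h1 := hVJ t₁ ht _ (hyT t₁ ht)
    have h2 := hH4 t₁ ht _ (hyT t₁ ht)
    have h3 := hinfV t₁ ht (yT t₁ t₀)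
    linarith
end
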